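/- Let Σ be a simple closed contour and L the integral operator on Σ with kernel L(x,y) = (f₁(x)g₁(y)+f₂(x)g₂(y))/(x-y), where f₁,f₂,g₁,g₂ extend holomorphically to the closed region inside Σ and f₁g₁+f₂g₂ ≡ 0 on that region. Then for all x, z ∈ Σ, ∫_Σ L(x,y)L(y,z) dy = 0; i.e., L² = 0 as an operator. -/
import Mathlib


open Complex

/-- Auxiliary lemma: if `F` is holomorphic on the closed ball and vanishes at a boundary
point `a`, then `F y / (y - a)`, patched at `a` with the derivative within the closed ball,
is continuous on the closed ball and holomorphic on the open ball. -/
lemma aux_patch (c : ℂ) (R : ℝ) (hR : 0 < R) (F : ℂ → ℂ) (a : ℂ)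
    (hF : DifferentiableOn ℂ F (Metric.closedBall c R)) (ha : a ∈ Metric.sphere c R)
    (hFa : F a = 0) :
    ContinuousOn
        (Function.update (fun y => F y / (y - a)) a
          (derivWithin F (Metric.closedBall c R) a)) (Metric.closedBall c R) ∧
      DifferentiableOn ℂ
        (Function.update (fun y => F y / (y - a)) a
          (derivWithin F (Metric.closedBall c R) a)) (Metric.ball c R) := by
  set s : Set ℂ := Metric.closedBall c R with hs
  set G : ℂ → ℂ := Function.update (fun y => F y / (y - a)) a (derivWithin F s a) with hG
  have has : a ∈ s := Metric.sphere_subset_closedBall ha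
  have haball : a ∉ Metric.ball c R := by
    intro h
    exact absurd (Metric.mem_sphere.mp ha) (ne_of_lt (Metric.mem_ball.mp h))
  constructor
  · intro y hy
    by_cases hya : y = a
    · subst hya
      rw [← continuousWithinAt_diff_self]
      have hd : HasDerivWithinAt F (derivWithin F s y) s y := (hF y hy).hasDerivWithinAt
      have htend := hasDerivWithinAt_iff_tendsto_slope.mp hd
      have heq : slope F y =ᶠ[nhdsWithin y (s \ {y})] G := by
        filter_upwards [eventually_mem_nhdsWithin] with w hw
        have hwy : w ≠ y := hw.2
        rw [hG, Function.update_of_ne hwy, slope_def_field, hFa, sub_zero]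
      have : Filter.Tendsto G (nhdsWithin y (s \ {y})) (nhds (derivWithin F s y)) :=
        htend.congr' heq
      show Filter.Tendsto G (nhdsWithin y (s \ {y})) (nhds (G y))
      rwa [hG, Function.update_self]
    · have hcont : ContinuousWithinAt (fun y => F y / (y - a)) s y :=
        ((hF y hy).continuousWithinAt).div
          (continuousWithinAt_id.sub continuousWithinAt_const) (sub_ne_zero.2 hya)
      refine hcont.congr_of_eventuallyEq ?_ (Function.update_of_ne hya _ _)
      have hne : ∀ᶠ w in nhdsWithin y s, w ≠ a :=
        eventually_nhdsWithin_of_eventually_nhds (eventually_ne_nhds hya)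
      filter_upwards [hne] with w hw
      exact Function.update_of_ne hw _ _
  · have hden : ∀ y ∈ Metric.ball c R, y - a ≠ 0 := fun y hy =>
      sub_ne_zero.2 (fun h => haball (by rw [← h]; exact hy))
    have hdiv : DifferentiableOn ℂ (fun y => F y / (y - a)) (Metric.ball c R) :=
      (hF.mono Metric.ball_subset_closedBall).div
        ((differentiable_id.sub_const a).differentiableOn) hden
    refine hdiv.congr fun y hy => ?_
    exact Function.update_of_ne (fun h => haball (by rw [← h]; exact hy)) _ _

theorem integrable_kernel_square_zero (c : ℂ) (R : ℝ) (hR : 0 < R)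
    (f₁ f₂ g₁ g₂ : ℂ → ℂ)
    (hf₁ : DifferentiableOn ℂ f₁ (Metric.closedBall c R))
    (hf₂ : DifferentiableOn ℂ f₂ (Metric.closedBall c R))
    (hg₁ : DifferentiableOn ℂ g₁ (Metric.closedBall c R))
    (hg₂ : DifferentiableOn ℂ g₂ (Metric.closedBall c R))
    (hnull : ∀ w ∈ Metric.closedBall c R, f₁ w * g₁ w + f₂ w * g₂ w = 0)
    (L : ℂ → ℂ → ℂ)
    (hL : ∀ x y, L x y = (f₁ x * g₁ y + f₂ x * g₂ y) / (x - y)) :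
    ∀ x ∈ Metric.sphere c R, ∀ z ∈ Metric.sphere c R,
      (∮ y in C(c, R), L x y * L y z) = 0 := by
  intro x hx z hz
  set s : Set ℂ := Metric.closedBall c R with hs
  have hxs : x ∈ s := Metric.sphere_subset_closedBall hx
  have hzs : z ∈ s := Metric.sphere_subset_closedBall hz
  set A : ℂ → ℂ := fun y => f₁ x * g₁ y + f₂ x * g₂ y with hA_def
  set B : ℂ → ℂ := fun y => f₁ y * g₁ z + f₂ y * g₂ z with hB_def
  have hA : DifferentiableOn ℂ A s := (hg₁.const_mul _).add (hg₂.const_mul _)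
  have hB : DifferentiableOn ℂ B s := (hf₁.mul_const _).add (hf₂.mul_const _)
  have hA0 : A x = 0 := hnull x hxs
  have hB0 : B z = 0 := hnull z hzs
  obtain ⟨hcA, hdA⟩ := aux_patch c R hR A x hA hx hA0
  obtain ⟨hcB, hdB⟩ := aux_patch c R hR B z hB hz hB0
  set GA : ℂ → ℂ := Function.update (fun y => A y / (y - x)) x (derivWithin A s x) with hGA
  set GB : ℂ → ℂ := Function.update (fun y => B y / (y - z)) z (derivWithin B s z) with hGB
  set H : ℂ → ℂ := fun y => -(GA y * GB y) with hH
  have hHc : ContinuousOn H s := (hcA.mul hcB).neg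
  have hHd : DifferentiableOn ℂ H (Metric.ball c R) := (hdA.mul hdB).neg
  have hH0 : (∮ y in C(c, R), H y) = 0 :=
    circleIntegral_eq_zero_of_differentiable_on_off_countable hR.le Set.countable_empty hHc
      (fun y hy => hHd.differentiableAt (Metric.isOpen_ball.mem_nhds hy.1))
  rw [← hH0]
  have hcnt : (circleMap c R ⁻¹' {x, z}).Countable :=
    ((Set.toFinite ({x, z} : Set ℂ)).countable).preimage_circleMap c hR.ne'
  refine intervalIntegral.integral_congr_ae ((hcnt.ae_notMem _).mono fun θ hθ _ => ?_)
  have hmem : circleMap c R θ ∉ ({x, z} : Set ℂ) := hθ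
  have hyx : circleMap c R θ ≠ x := fun h => hmem (by simp [h])
  have hyz : circleMap c R θ ≠ z := fun h => hmem (by simp [h])
  congr 1
  set y := circleMap c R θ
  show L x y * L y z = H y
  rw [hL, hL, hH]
  show A y / (x - y) * (B y / (y - z)) = -(GA y * GB y)
  rw [hGA, hGB, Function.update_of_ne hyx, Function.update_of_ne hyz,
    show x - y = -(y - x) by ring, div_neg, neg_mul]
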